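/- arXiv:2506.10341 — 2 statements merged into one kernel-verified Lean document; each statement's English description precedes it below -/
import Mathlib

section
/- Let d = dim_TE(H, ℓ, ε) be finite. For any sequence of actions (a_1, ..., a_τ) with τ ≥ Kd + 1 for integer K, there exists some index j such that a_j is ε-transfer dependent on at least K disjoint subsequences of (a_1, ..., a_{j-1}). -/
/-!
Greedy bucketing: scan the actions in order and keep `K` pairwise disjoint buckets of earlier
indices, each of which is an `ε`-independent chain (every member is independent of the earlier
members of its bucket). As long as `a j` is independent of some bucket, append `j` to it. If
this never got stuck for `j < τ`, the buckets would partition `{0, …, τ - 1}`; but re-indexed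
in increasing order, a chain is an independent sequence, so it has at most `d` elements by
definition of `dim_TE`, forcing `τ ≤ K d`.
-/

/-- `x` is `ε`-transfer dependent on the subsequence of the trajectory `a`
indexed by the finite set `s`. -/
def DepOn {A H : Type*} (r : H → A → ℝ) (D : A → H → H → ℝ)
    (ε : ℝ) (x : A) (s : Finset ℕ) (a : ℕ → A) : Prop :=
  ∀ η η' : H, (∑ i ∈ s, D (a i) η' η) ≤ ε ^ 2 → |r η x - r η' x| ≤ ε

/-- The `ε`-transfer eluder dimension: the length of the longest action sequence
each of whose elements is `ε'`-transfer independent of its predecessors, for some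
`ε' ≥ ε`. -/
noncomputable def dimTE {A H : Type*} (r : H → A → ℝ) (D : A → H → H → ℝ)
    (ε : ℝ) : ℕ∞ :=
  sSup {n : ℕ∞ | ∃ (m : ℕ) (a : ℕ → A) (ε' : ℝ), ε ≤ ε' ∧ n = (m : ℕ∞) ∧
    ∀ i < m, ¬ DepOn r D ε' (a i) (Finset.range i) a}

open Finset Function

section DisjointFamily

variable {ι α : Type*} [DecidableEq ι] [DecidableEq α]

theorem Pairwise.disjoint_update_insert {B : ι → Finset α} (hB : Pairwise (Disjoint on B))
    {x : α} (hx : ∀ k, x ∉ B k) (k₀ : ι) :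
    Pairwise (Disjoint on update B k₀ (insert x (B k₀))) := by
  intro k k' hkk'
  rcases eq_or_ne k k₀ with rfl | hk
  · simp only [onFun, update_self, update_of_ne hkk'.symm]
    exact disjoint_insert_left.2 ⟨hx k', hB hkk'⟩
  rcases eq_or_ne k' k₀ with rfl | hk'
  · simp only [onFun, update_self, update_of_ne hk]
    exact disjoint_insert_right.2 ⟨hx k, hB hkk'⟩
  simpa only [onFun, update_of_ne hk, update_of_ne hk'] using hB hkk'

theorem Finset.sum_card_update_insert [Fintype ι] (B : ι → Finset α) {x : α} {k₀ : ι}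
    (hx : x ∉ B k₀) :
    ∑ k, #(update B k₀ (insert x (B k₀)) k) = ∑ k, #(B k) + 1 := by
  rw [← add_sum_erase _ _ (mem_univ k₀), ← add_sum_erase _ _ (mem_univ k₀),
    update_self, card_insert_of_notMem hx,
    sum_congr rfl fun k hk => by rw [update_of_ne (ne_of_mem_erase hk)]]
  ring

end DisjointFamily

theorem Finset.filter_lt_nth_eq_image_range (s : Finset ℕ) {t : ℕ} (ht : t < #s) :
    {v ∈ s | v < Nat.nth (· ∈ s) t} = (range t).image (Nat.nth (· ∈ s)) := by
  have hf : (Set.ofPred (· ∈ s)).Finite := s.finite_toSet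
  ext v
  simp only [mem_filter, mem_image, mem_range]
  constructor
  · rintro ⟨hv, hvt⟩
    obtain ⟨i, hi, rfl⟩ := Nat.exists_lt_card_finite_nth_eq hf hv
    exact ⟨i, Nat.lt_of_nth_lt_nth_of_lt_card hf hvt hi, rfl⟩
  · rintro ⟨i, hit, rfl⟩
    exact ⟨Nat.nth_mem_of_lt_card hf (by simpa using hit.trans ht),
      Nat.nth_lt_nth_of_lt_card hf hit (by simpa using ht)⟩

section TransferEluder

variable {A H : Type*} {r : H → A → ℝ} {D : A → H → H → ℝ} {ε : ℝ} {a : ℕ → A}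

theorem depOn_image {x : A} {s : Finset ℕ} {f : ℕ → ℕ} (hf : Set.InjOn f s) :
    DepOn r D ε x (s.image f) a ↔ DepOn r D ε x s (a ∘ f) := by
  simp only [DepOn, sum_image hf, comp_apply]

theorem natCast_le_dimTE {m : ℕ} {b : ℕ → A}
    (hb : ∀ i < m, ¬ DepOn r D ε (b i) (range i) b) : (m : ℕ∞) ≤ dimTE r D ε :=
  le_sSup ⟨m, b, ε, le_rfl, rfl, hb⟩

variable (r D ε a) in
def IsIndepChain (s : Finset ℕ) : Prop :=
  ∀ i ∈ s, ¬ DepOn r D ε (a i) {j ∈ s | j < i} a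

theorem IsIndepChain.insert {s : Finset ℕ} {n : ℕ} (hsub : s ⊆ range n)
    (hs : IsIndepChain r D ε a s) (hn : ¬ DepOn r D ε (a n) s a) :
    IsIndepChain r D ε a (insert n s) := by
  intro i hi
  rcases mem_insert.1 hi with rfl | hi
  · rwa [filter_insert, if_neg (lt_irrefl i),
      filter_true_of_mem fun j hj => mem_range.1 (hsub hj)]
  · rw [filter_insert, if_neg (mem_range.1 (hsub hi)).not_gt]
    exact hs i hi

theorem IsIndepChain.card_le {d : ℕ} (hd : dimTE r D ε = d) {s : Finset ℕ}
    (hs : IsIndepChain r D ε a s) : #s ≤ d := by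
  have hf : (Set.ofPred (· ∈ s)).Finite := s.finite_toSet
  have hle : (#s : ℕ∞) ≤ dimTE r D ε := natCast_le_dimTE fun t ht => by
    have hinj : Set.InjOn (Nat.nth (· ∈ s)) (range t) :=
      (Nat.nth_injOn hf).mono fun i hi => by simpa using (mem_range.1 hi).trans ht
    rw [← depOn_image hinj, ← filter_lt_nth_eq_image_range s ht]
    exact hs _ (Nat.nth_mem_of_lt_card hf (by simpa using ht))
  rw [hd] at hle
  exact_mod_cast hle

variable (r D ε a) in
theorem exists_dep_or_exists_indepChain_partition {ι : Type*} [Fintype ι] [DecidableEq ι]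
    (n : ℕ) :
    (∃ j < n, ∃ B : ι → Finset ℕ, (∀ k, B k ⊆ range j) ∧
      (∀ k k', k ≠ k' → Disjoint (B k) (B k')) ∧ ∀ k, DepOn r D ε (a j) (B k) a) ∨
    ∃ B : ι → Finset ℕ, (∀ k, B k ⊆ range n) ∧ Pairwise (Disjoint on B) ∧
      (∀ k, IsIndepChain r D ε a (B k)) ∧ ∑ k, #(B k) = n := by
  induction n with
  | zero => exact .inr ⟨fun _ => ∅, fun _ => empty_subset _, fun _ _ _ => disjoint_empty_left _,
      fun _ i hi => absurd hi (notMem_empty i), by simp⟩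
  | succ n ih =>
    rcases ih with ⟨j, hj, hdep⟩ | ⟨B, hsub, hdisj, hchain, hcard⟩
    · exact .inl ⟨j, by omega, hdep⟩
    by_cases hdep : ∀ k, DepOn r D ε (a n) (B k) a
    · exact .inl ⟨n, n.lt_add_one, B, hsub, fun _ _ hkk' => hdisj hkk', hdep⟩
    obtain ⟨k₀, hk₀⟩ := not_forall.1 hdep
    have hn : ∀ k, n ∉ B k := fun k hk => lt_irrefl n (mem_range.1 (hsub k hk))
    refine .inr ⟨update B k₀ (insert n (B k₀)), fun k => ?_, hdisj.disjoint_update_insert hn k₀,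
      fun k => ?_, by rw [sum_card_update_insert B (hn k₀), hcard]⟩
    · rcases eq_or_ne k k₀ with rfl | hk
      · rw [update_self, range_add_one]
        exact insert_subset_insert n (hsub k)
      · rw [update_of_ne hk]
        exact (hsub k).trans (range_subset_range.2 n.le_succ)
    · rcases eq_or_ne k k₀ with rfl | hk
      · rw [update_self]
        exact (hchain k).insert (hsub k) hk₀
      · rw [update_of_ne hk]
        exact hchain k

end TransferEluder

theorem stmt7_general {A H : Type*} (r : H → A → ℝ) (D : A → H → H → ℝ)
    (ε : ℝ) (d K τ : ℕ)
    (hd : dimTE r D ε = (d : ℕ∞)) (hτ : K * d + 1 ≤ τ) (a : ℕ → A) :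
    ∃ j < τ, ∃ B : Fin K → Finset ℕ,
      (∀ k, B k ⊆ Finset.range j) ∧
      (∀ k k', k ≠ k' → Disjoint (B k) (B k')) ∧
      (∀ k, DepOn r D ε (a j) (B k) a) := by
  refine (exists_dep_or_exists_indepChain_partition r D ε a τ).resolve_right ?_
  rintro ⟨B, -, -, hchain, hcard⟩
  have : τ ≤ K * d :=
    calc τ = ∑ k, #(B k) := hcard.symm
      _ ≤ ∑ _k : Fin K, d := sum_le_sum fun k _ => (hchain k).card_le hd
      _ = K * d := by simp
  omega

/-- If `d = dim_TE(H,ℓ,ε)` is finite, then in any sequence of `τ ≥ K d + 1`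
actions there is an index `j` such that `a_j` is `ε`-transfer dependent on at
least `K` pairwise disjoint subsequences of its predecessors. -/
theorem stmt7 {A H : Type*} (r : H → A → ℝ) (D : A → H → H → ℝ)
    (ε : ℝ) (hε : 0 < ε) (d K τ : ℕ)
    (hd : dimTE r D ε = (d : ℕ∞)) (hτ : K * d + 1 ≤ τ) (a : ℕ → A) :
    ∃ j < τ, ∃ B : Fin K → Finset ℕ,
      (∀ k, B k ⊆ Finset.range j) ∧
      (∀ k k', k ≠ k' → Disjoint (B k) (B k')) ∧
      (∀ k, DepOn r D ε (a j) (B k) a) :=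
  stmt7_general r D ε d K τ hd hτ a
end

section
/- Consider the reasoning problem with demonstration feedback: the hypothesis space H consists of hypotheses η each with an answer sequence a*_η ∈ S^L; reward r_η(a) = 1{a = a*_η}; feedback is deterministic and equals a*_η regardless of the action; verifier loss ℓ(a, o, η) = 1{o ≠ a*_η}. Then for any ε with 0 < ε < 1, the ε-transfer eluder dimension dim_TE(H, ℓ, ε) ≤ 1. -/
open Finset

theorem dimTE_le_of_forall_depOn {A H : Type*} {r : H → A → ℝ} {D : A → H → H → ℝ} {ε : ℝ}
    (n : ℕ) (h : ∀ (a : ℕ → A) (ε' : ℝ), ε ≤ ε' → DepOn r D ε' (a n) (range n) a) :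
    dimTE r D ε ≤ n := by
  refine sSup_le ?_
  rintro _ ⟨m, a, ε', hεε', rfl, hindep⟩
  by_contra hlt
  exact hindep n (by exact_mod_cast not_le.mp hlt) (h a ε' hεε')

section Demonstration

variable {S Hy : Type*} {L : ℕ} {astar : Hy → (Fin L → S)}
  {r : Hy → (Fin L → S) → ℝ} {D : (Fin L → S) → Hy → Hy → ℝ}

open Classical in
theorem abs_sub_reward_le_one (hr : ∀ η a, r η a = if a = astar η then (1 : ℝ) else 0)
    (η η' : Hy) (x : Fin L → S) : |r η x - r η' x| ≤ 1 := by
  rw [hr, hr]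
  split_ifs <;> norm_num

open Classical in
theorem astar_eq_of_loss_lt_one
    (hD : ∀ a η' η, D a η' η = if astar η' = astar η then (0 : ℝ) else 1)
    {x : Fin L → S} {η' η : Hy} (hlt : D x η' η < 1) : astar η' = astar η := by
  by_contra hne
  rw [hD, if_neg hne] at hlt
  exact lt_irrefl _ hlt

open Classical in
theorem depOn_range_one (hr : ∀ η a, r η a = if a = astar η then (1 : ℝ) else 0)
    (hD : ∀ a η' η, D a η' η = if astar η' = astar η then (0 : ℝ) else 1)
    {ε : ℝ} (hε : 0 < ε) (x : Fin L → S) (a : ℕ → Fin L → S) :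
    DepOn r D ε x (range 1) a := by
  intro η η' hloss
  rcases le_or_gt 1 ε with hε1 | hε1
  · exact (abs_sub_reward_le_one hr η η' x).trans hε1
  · rw [range_one, sum_singleton] at hloss
    have hlt : D (a 0) η' η < 1 := hloss.trans_lt (pow_lt_one₀ hε.le hε1 two_ne_zero)
    rw [hr, hr, astar_eq_of_loss_lt_one hD hlt, sub_self, abs_zero]
    exact hε.le

end Demonstration

open Classical in
theorem stmt10_general {S Hy : Type*} (L : ℕ)
    (astar : Hy → (Fin L → S))
    (r : Hy → (Fin L → S) → ℝ)
    (hr : ∀ η a, r η a = if a = astar η then (1 : ℝ) else 0)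
    (D : (Fin L → S) → Hy → Hy → ℝ)
    (hD : ∀ a η' η, D a η' η = if astar η' = astar η then (0 : ℝ) else 1)
    (ε : ℝ) (hε0 : 0 < ε) :
    dimTE r D ε ≤ 1 := by
  exact_mod_cast dimTE_le_of_forall_depOn 1 fun a ε' hεε' =>
    depOn_range_one hr hD (hε0.trans_le hεε') (a 1) a

open Classical in
/-- Demonstration feedback: each hypothesis `η` has an answer sequence
`a*_η ∈ S^L`, reward `r_η(a) = 1{a = a*_η}`, the feedback always equals `a*_η`,
and the verifier loss is `ℓ(a,o,η) = 1{o ≠ a*_η}`; hence the expected loss of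
`η` under feedback from `η'` is `1{a*_{η'} ≠ a*_η}`.  For `0 < ε < 1` the
`ε`-transfer eluder dimension is at most `1`. -/
theorem stmt10 {S Hy : Type*} (L : ℕ)
    (astar : Hy → (Fin L → S))
    (r : Hy → (Fin L → S) → ℝ)
    (hr : ∀ η a, r η a = if a = astar η then (1 : ℝ) else 0)
    (D : (Fin L → S) → Hy → Hy → ℝ)
    (hD : ∀ a η' η, D a η' η = if astar η' = astar η then (0 : ℝ) else 1)
    (ε : ℝ) (hε0 : 0 < ε) (hε1 : ε < 1) :
    dimTE r D ε ≤ 1 :=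
  stmt10_general L astar r hr D hD ε hε0
end
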